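/- For every integer n ≥ 2 and every Signgiver strategy in the prefix-discrepancy game on [n], Positioner can choose the order of queries so that at some time t and some 1 ≤ j ≤ n the board satisfies |Σ_{i=1}^{j} x_i^t| ≥ (1/3)·log₂(n). Consequently, the game value satisfies d(n) ≥ (1/3)·log₂(n). -/

import Mathlib

/-- A Signgiver strategy in the prefix-discrepancy game on `[n]` (positions
`Fin n`): given the history of play (a list of (position, sign) pairs, most
recent first) and the position just queried by Positioner, it returns a sign. -/
def SgStrategy (n : ℕ) : Type := List (Fin n × ℤ) → Fin n → ℤ

/-- A valid strategy always answers `+1` or `-1`. -/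
def ValidStrategy {n : ℕ} (σ : SgStrategy n) : Prop :=
  ∀ h i, σ h i = 1 ∨ σ h i = -1

/-- The history of play produced by the strategy `σ` against the (chronological,
most recent first) list `qs` of positions queried by Positioner. -/
def playHist {n : ℕ} (σ : SgStrategy n) : List (Fin n) → List (Fin n × ℤ)
  | [] => []
  | q :: qs => (q, σ (playHist σ qs) q) :: playHist σ qs

/-- The value of the board at position `i` given the history `h`: the assigned
sign if `i` has been queried, and `0` otherwise. -/
def boardVal {n : ℕ} (h : List (Fin n × ℤ)) (i : Fin n) : ℤ :=
  ((h.find? fun p => decide (p.1 = i)).map Prod.snd).getD 0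

/-- The signed discrepancy `disc(j) = Σ_{i=1}^{j} x_i` of the prefix `[1,j]`
(positions of index `< j` in the 0-indexed board). -/
def prefixDisc {n : ℕ} (h : List (Fin n × ℤ)) (j : ℕ) : ℤ :=
  ∑ p ∈ Finset.univ.filter (fun p : Fin n => (p : ℕ) < j), boardVal h p

/-!
Positioner keeps an untouched interval `[l, r)` of the board and tracks two quantities: the
prefix discrepancy at `l`, which is `B - a`, and the total discrepancy, which is `b - B`.
He wins once `a = 0` or `b = 0`. Querying a point `q` of the interval, he continues to the right
of `q` after a `+1` (moving to `(a - 1, b + 1)`) and to the left of `q` after a `-1` (moving to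
`(a, b - 1)`). An interval of length `C(2a + b - 1, a) - 1` is enough, because Pascal's rule
splits this binomial coefficient exactly into the lengths the two continuations need. Starting
from `a = b = B = ⌈log₈ n⌉` needs `C(3B - 1, B) ≤ 8^(B-1) + 2 ≤ n + 1`; this holds because
consecutive coefficients `C(3k + 2, k + 1)` grow by a factor of at most `27/4 < 8`.
-/

namespace PrefixDiscrepancy

variable {n : ℕ}

lemma boardVal_cons (q : Fin n) (s : ℤ) (h : List (Fin n × ℤ)) (i : Fin n) :
    boardVal ((q, s) :: h) i = if q = i then s else boardVal h i := by
  by_cases hqi : q = i <;> simp [boardVal, hqi]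

lemma boardVal_playHist_ne_zero {σ : SgStrategy n} (hσ : ValidStrategy σ) {q : Fin n} :
    ∀ {qs : List (Fin n)}, q ∈ qs → boardVal (playHist σ qs) q ≠ 0
  | q' :: qs, hq => by
    rw [playHist, boardVal_cons]
    split_ifs with hq'
    · rcases hσ (playHist σ qs) q' with h | h <;> simp [h]
    · exact boardVal_playHist_ne_zero hσ ((List.mem_cons.mp hq).resolve_left (Ne.symm hq'))

lemma prefixDisc_nil (j : ℕ) : prefixDisc ([] : List (Fin n × ℤ)) j = 0 := by
  simp [prefixDisc, boardVal]

lemma prefixDisc_zero (h : List (Fin n × ℤ)) : prefixDisc h 0 = 0 := by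
  simp [prefixDisc]

lemma prefixDisc_cons {h : List (Fin n × ℤ)} {q : Fin n} (hq : boardVal h q = 0) (s : ℤ)
    (j : ℕ) : prefixDisc ((q, s) :: h) j = prefixDisc h j + if (q : ℕ) < j then s else 0 := by
  have hval : ∀ i, boardVal ((q, s) :: h) i = boardVal h i + if q = i then s else 0 := by
    intro i
    rw [boardVal_cons]
    split_ifs with hqi
    · simp [← hqi, hq]
    · simp
  simp only [prefixDisc, hval, Finset.sum_add_distrib, Finset.sum_ite_eq, Finset.mem_filter,
    Finset.mem_univ, true_and]

lemma prefixDisc_eq_of_untouched {h : List (Fin n × ℤ)} {l r j : ℕ}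
    (hfree : ∀ i : Fin n, l ≤ i → i < r → boardVal h i = 0) (hlj : l ≤ j) (hjr : j ≤ r) :
    prefixDisc h j = prefixDisc h l := by
  refine (Finset.sum_subset (fun i hi => ?_) fun i hi hi' => ?_).symm
  · simp only [Finset.mem_filter, Finset.mem_univ, true_and] at hi ⊢
    omega
  · simp only [Finset.mem_filter, Finset.mem_univ, true_and, not_lt] at hi hi'
    exact hfree i hi' (by omega)

lemma one_le_of_le_abs_prefixDisc {h : List (Fin n × ℤ)} {B j : ℕ} (hB : 0 < B)
    (hj : (B : ℤ) ≤ |prefixDisc h j|) : 1 ≤ j := by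
  refine Nat.one_le_iff_ne_zero.mpr fun hj0 => ?_
  rw [hj0, prefixDisc_zero, abs_zero] at hj
  omega

theorem exists_le_abs_prefixDisc {σ : SgStrategy n} (hσ : ValidStrategy σ) (B : ℕ) :
    ∀ (a b l r : ℕ) (qs : List (Fin n)), r ≤ n → l + (2 * a + b - 1).choose a ≤ r + 1 →
      qs.Nodup → (∀ i : Fin n, l ≤ i → i < r → boardVal (playHist σ qs) i = 0) →
      prefixDisc (playHist σ qs) l = B - a → prefixDisc (playHist σ qs) n = b - B →
      ∃ qs' : List (Fin n), qs'.Nodup ∧ ∃ j ≤ n, (B : ℤ) ≤ |prefixDisc (playHist σ qs') j|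
  | 0, b, l, r, qs, hr, hlen, hqs, _, hpre, _ =>
    ⟨qs, hqs, l, by simp at hlen; omega, by simp [hpre]⟩
  | a + 1, 0, _, _, qs, _, _, hqs, _, _, htot =>
    ⟨qs, hqs, n, le_rfl, by simp [htot]⟩
  | a + 1, b + 1, l, r, qs, hr, hlen, hqs, hfree, hpre, htot => by
    set N := 2 * a + b + 1
    have hleft : 0 < N.choose (a + 1) := Nat.choose_pos (by omega)
    have hright : 0 < N.choose a := Nat.choose_pos (by omega)
    rw [show 2 * (a + 1) + (b + 1) - 1 = N + 1 by omega, Nat.choose_succ_succ'] at hlen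
    -- `[l, q)` is long enough for the state `(a + 1, b)`, `[q + 1, r)` for `(a, b + 2)`.
    let q : Fin n := ⟨l + N.choose (a + 1) - 1, by omega⟩
    have hq : boardVal (playHist σ qs) q = 0 :=
      hfree q (by simp [q]; omega) (by simp [q]; omega)
    have hqs' : (q :: qs).Nodup :=
      List.nodup_cons.mpr ⟨fun hmem => boardVal_playHist_ne_zero hσ hmem hq, hqs⟩
    have hdisc := prefixDisc_cons hq (σ (playHist σ qs) q)
    have hkept : ∀ i : Fin n, i ≠ q →
        boardVal (playHist σ (q :: qs)) i = boardVal (playHist σ qs) i :=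
      fun i hi => by rw [playHist, boardVal_cons, if_neg (Ne.symm hi)]
    have htot' : prefixDisc (playHist σ (q :: qs)) n = prefixDisc (playHist σ qs) n +
        σ (playHist σ qs) q := by
      rw [playHist, hdisc, if_pos q.isLt]
    rcases hσ (playHist σ qs) q with hs | hs
    · refine exists_le_abs_prefixDisc hσ B a (b + 2) (q + 1) r (q :: qs) hr
        (by rw [show 2 * a + (b + 2) - 1 = N by omega]; simp [q]; omega) hqs'
        (fun i hi hir => ?_) ?_ (by rw [htot', hs, htot]; push_cast; ring)
      · rw [hkept i (by rintro rfl; simp at hi)]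
        exact hfree i (by simp [q] at hi; omega) hir
      · rw [playHist, hdisc, hs, if_pos (by simp),
          prefixDisc_eq_of_untouched hfree (by simp [q]; omega) (by simp [q]; omega), hpre]
        push_cast
        ring
    · refine exists_le_abs_prefixDisc hσ B (a + 1) b l q (q :: qs) (by omega)
        (by rw [show 2 * (a + 1) + b - 1 = N by omega]; simp [q]; omega) hqs'
        (fun i hli hi => ?_) ?_ (by rw [htot', hs, htot]; push_cast; ring)
      · rw [hkept i (by rintro rfl; simp at hi)]
        exact hfree i hli (by simp [q] at hi; omega)
      · rw [playHist, hdisc, if_neg (by simp [q]; omega), hpre]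
        ring
termination_by a b => 2 * a + b

lemma four_mul_choose_le (k : ℕ) :
    4 * (3 * k + 5).choose (k + 2) ≤ 27 * (3 * k + 2).choose (k + 1) := by
  have h₁ := Nat.choose_mul_succ_eq (3 * k + 2) (k + 1)
  have h₂ := Nat.choose_mul_succ_eq (3 * k + 3) (k + 1)
  have h₃ := Nat.add_one_mul_choose_eq (3 * k + 4) (k + 1)
  rw [show 3 * k + 2 + 1 - (k + 1) = 2 * k + 2 by omega] at h₁
  rw [show 3 * k + 3 + 1 - (k + 1) = 2 * k + 3 by omega] at h₂
  set c₀ := (3 * k + 2).choose (k + 1)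
  set c₃ := (3 * k + 5).choose (k + 2)
  have hscaled : 4 * c₃ * ((k + 2) * (2 * k + 3) * (2 * k + 2)) =
      4 * ((3 * k + 5) * (3 * k + 4) * (3 * k + 3)) * c₀ := by
    zify at h₁ h₂ h₃ ⊢
    linear_combination (-4 * (2 * k + 3) * (2 * k + 2) : ℤ) * h₃
      - (4 * (3 * k + 5) * (2 * k + 2) : ℤ) * h₂ - (4 * (3 * k + 5) * (3 * k + 4) : ℤ) * h₁
  have hratio : 4 * ((3 * k + 5) * (3 * k + 4) * (3 * k + 3)) ≤
      27 * ((k + 2) * (2 * k + 3) * (2 * k + 2)) := by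
    ring_nf
    omega
  refine Nat.le_of_mul_le_mul_right (c := (k + 2) * (2 * k + 3) * (2 * k + 2)) ?_ (by positivity)
  calc 4 * c₃ * ((k + 2) * (2 * k + 3) * (2 * k + 2))
      = 4 * ((3 * k + 5) * (3 * k + 4) * (3 * k + 3)) * c₀ := hscaled
    _ ≤ 27 * ((k + 2) * (2 * k + 3) * (2 * k + 2)) * c₀ := Nat.mul_le_mul_right _ hratio
    _ = 27 * c₀ * ((k + 2) * (2 * k + 3) * (2 * k + 2)) := by ring

lemma choose_le_eight_pow {k : ℕ} (hk : 2 ≤ k) : (3 * k + 2).choose (k + 1) ≤ 8 ^ k := by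
  induction k, hk using Nat.le_induction with
  | base => decide
  | succ k _ ih =>
    have := four_mul_choose_le k
    rw [show 3 * (k + 1) + 2 = 3 * k + 5 by ring, pow_succ]
    change (3 * k + 5).choose (k + 2) ≤ _
    omega

lemma choose_three_mul_sub_one_le {B : ℕ} (hB : 1 ≤ B) :
    (3 * B - 1).choose B ≤ 8 ^ (B - 1) + 2 := by
  obtain ⟨k, rfl⟩ : ∃ k, B = k + 1 := ⟨B - 1, by omega⟩
  rw [show 3 * (k + 1) - 1 = 3 * k + 2 by omega, Nat.add_sub_cancel]
  rcases lt_or_ge k 2 with hk | hk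
  · interval_cases k <;> decide
  · linarith [choose_le_eight_pow hk]

end PrefixDiscrepancy

/-- Against every Signgiver strategy, Positioner can query positions (in some
repetition-free order) so that at some time some prefix discrepancy is at least
`(1/3)·log₂ n`; hence `d(n) ≥ (1/3)·log₂ n`. -/
theorem stmt_12 (n : ℕ) (hn : 2 ≤ n) (σ : SgStrategy n) (hσ : ValidStrategy σ) :
    ∃ qs : List (Fin n), qs.Nodup ∧
      ∃ j, 1 ≤ j ∧ j ≤ n ∧
        1 / 3 * Real.logb 2 n ≤ |(prefixDisc (playHist σ qs) j : ℝ)| := by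
  open PrefixDiscrepancy in
  set B := Nat.clog 8 n
  have hB : 0 < B := Nat.clog_pos (by norm_num) hn
  have hn_lt : 8 ^ (B - 1) < n := Nat.pow_pred_clog_lt_self (by norm_num) hn
  obtain ⟨qs, hqs, j, hjn, hj⟩ := exists_le_abs_prefixDisc hσ B B B 0 n [] le_rfl
    (by rw [show 2 * B + B - 1 = 3 * B - 1 by omega]; linarith [choose_three_mul_sub_one_le hB])
    List.nodup_nil (fun _ _ _ => rfl) (by rw [sub_self]; exact prefixDisc_nil 0)
    (by rw [sub_self]; exact prefixDisc_nil n)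
  refine ⟨qs, hqs, j, one_le_of_le_abs_prefixDisc hB hj, hjn, ?_⟩
  have hlog : Real.logb 2 n ≤ 3 * B := by
    have h8 : n ≤ 2 ^ (3 * B) :=
      (Nat.le_pow_clog (by norm_num : 1 < 8) n).trans_eq (by rw [pow_mul]; rfl)
    rw [Real.logb_le_iff_le_rpow (by norm_num) (by positivity),
      show (3 : ℝ) * B = ((3 * B : ℕ) : ℝ) by push_cast; ring, Real.rpow_natCast]
    exact_mod_cast h8
  have hdisc : (B : ℝ) ≤ |(prefixDisc (playHist σ qs) j : ℝ)| := by exact_mod_cast hj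
  linarith
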